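/- Let m ≤ M < 0 be real numbers, let c > 0 and c' > 0, and let f : ℝ → ℝ be differentiable on [m,M] with f'(x) ≤ −c and |f'(x)| ≤ c' for all x ∈ [m,M]. Let T > 0 and let S₋, S₊ : ℝ → ℝ be differentiable on [0,T] with m ≤ S₋(t) ≤ S₊(t) ≤ M for all t ∈ [0,T], and suppose (S₊ − S₋)'(t) ≤ M·(f(S₋(t)) − f(S₊(t))) for all t ∈ [0,T]. Set B := −c·M > 0 and C := c'·(S₊(0) − S₋(0)). Then: (i) S₊(t) − S₋(t) ≤ (S₊(0) − S₋(0))·e^{−Bt} for all t ∈ [0,T]; and (ii) for every t ∈ [0,T] and all real numbers s, a with S₋(t) ≤ s ≤ S₊(t) and f(S₊(t)) ≤ a ≤ f(S₋(t)), one has |f(s) − a| ≤ C·e^{−Bt}. -/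

import Mathlib

/-!
The oscillation `u = S₊ - S₋` satisfies `u' ≤ M (f(S₋) - f(S₊)) ≤ c M u`, because `f` drops by at
least `c u` between `S₋` and `S₊` and `M < 0`; Grönwall's inequality then gives
`u(t) ≤ u(0) e^{cMt}`. Since `f` is decreasing, both `f(s)` and `a` lie in `[f(S₊), f(S₋)]`, an
interval of length at most `c' u` by the mean value theorem.
-/

open Set Real

section MeanValue

variable {D : Set ℝ} {f f' : ℝ → ℝ} {C : ℝ}

theorem Convex.mul_sub_le_image_sub_of_le_hasDerivAt (hD : Convex ℝ D)
    (hf : ∀ x ∈ D, HasDerivAt f (f' x) x) (hf'_ge : ∀ x ∈ D, C ≤ f' x)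
    {x y : ℝ} (hx : x ∈ D) (hy : y ∈ D) (hxy : x ≤ y) : C * (y - x) ≤ f y - f x :=
  hD.mul_sub_le_image_sub_of_le_deriv
    (fun z hz => (hf z hz).continuousAt.continuousWithinAt)
    (fun z hz => (hf z (interior_subset hz)).differentiableAt.differentiableWithinAt)
    (fun z hz => (hf z (interior_subset hz)).deriv ▸ hf'_ge z (interior_subset hz))
    x hx y hy hxy

theorem Convex.image_sub_le_mul_sub_of_hasDerivAt_le (hD : Convex ℝ D)
    (hf : ∀ x ∈ D, HasDerivAt f (f' x) x) (hf'_le : ∀ x ∈ D, f' x ≤ C)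
    {x y : ℝ} (hx : x ∈ D) (hy : y ∈ D) (hxy : x ≤ y) : f y - f x ≤ C * (y - x) :=
  hD.image_sub_le_mul_sub_of_deriv_le
    (fun z hz => (hf z hz).continuousAt.continuousWithinAt)
    (fun z hz => (hf z (interior_subset hz)).differentiableAt.differentiableWithinAt)
    (fun z hz => (hf z (interior_subset hz)).deriv ▸ hf'_le z (interior_subset hz))
    x hx y hy hxy

end MeanValue

theorem le_mul_exp_of_hasDerivAt_le_mul {u u' : ℝ → ℝ} {K a b : ℝ}
    (hu : ∀ t ∈ Icc a b, HasDerivAt u (u' t) t) (bound : ∀ t ∈ Icc a b, u' t ≤ K * u t)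
    {t : ℝ} (ht : t ∈ Icc a b) : u t ≤ u a * exp (K * (t - a)) := by
  have key := le_gronwallBound_of_liminf_deriv_right_le (ε := 0)
    (fun s hs => (hu s hs).continuousAt.continuousWithinAt)
    (fun s hs _ hr => (hu s (Ico_subset_Icc_self hs)).hasDerivWithinAt.liminf_right_slope_le hr)
    le_rfl (fun s hs => by simpa using bound s (Ico_subset_Icc_self hs)) t ht
  rwa [gronwallBound_ε0] at key

theorem stmt_2_general (m M c c' : ℝ) (hM : M < 0) (hc : 0 < c) (hc' : 0 < c')
    (f f' : ℝ → ℝ)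
    (hf : ∀ x ∈ Set.Icc m M, HasDerivAt f (f' x) x)
    (hf'le : ∀ x ∈ Set.Icc m M, f' x ≤ -c)
    (hf'abs : ∀ x ∈ Set.Icc m M, |f' x| ≤ c')
    (T : ℝ)
    (Sm Sp Sm' Sp' : ℝ → ℝ)
    (hSm : ∀ t ∈ Set.Icc (0:ℝ) T, HasDerivAt Sm (Sm' t) t)
    (hSp : ∀ t ∈ Set.Icc (0:ℝ) T, HasDerivAt Sp (Sp' t) t)
    (hbound : ∀ t ∈ Set.Icc (0:ℝ) T, m ≤ Sm t ∧ Sm t ≤ Sp t ∧ Sp t ≤ M)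
    (hineq : ∀ t ∈ Set.Icc (0:ℝ) T, Sp' t - Sm' t ≤ M * (f (Sm t) - f (Sp t))) :
    (∀ t ∈ Set.Icc (0:ℝ) T,
      Sp t - Sm t ≤ (Sp 0 - Sm 0) * Real.exp (-(-c * M) * t)) ∧
    (∀ t ∈ Set.Icc (0:ℝ) T, ∀ s a : ℝ,
      Sm t ≤ s → s ≤ Sp t → f (Sp t) ≤ a → a ≤ f (Sm t) →
      |f s - a| ≤ (c' * (Sp 0 - Sm 0)) * Real.exp (-(-c * M) * t)) := by
  have hdrop {x y : ℝ} (hx : x ∈ Icc m M) (hy : y ∈ Icc m M) (hxy : x ≤ y) :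
      c * (y - x) ≤ f x - f y := by
    linarith [(convex_Icc m M).image_sub_le_mul_sub_of_hasDerivAt_le hf hf'le hx hy hxy]
  have hlip {x y : ℝ} (hx : x ∈ Icc m M) (hy : y ∈ Icc m M) (hxy : x ≤ y) :
      f x - f y ≤ c' * (y - x) := by
    linarith [(convex_Icc m M).mul_sub_le_image_sub_of_le_hasDerivAt hf
      (fun z hz => (abs_le.1 (hf'abs z hz)).1) hx hy hxy]
  have hmem (t : ℝ) (ht : t ∈ Icc 0 T) : Sm t ∈ Icc m M ∧ Sp t ∈ Icc m M := by
    obtain ⟨h₁, h₂, h₃⟩ := hbound t ht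
    exact ⟨⟨h₁, h₂.trans h₃⟩, ⟨h₁.trans h₂, h₃⟩⟩
  have hosc (t : ℝ) (ht : t ∈ Icc 0 T) :
      Sp t - Sm t ≤ (Sp 0 - Sm 0) * exp (-(-c * M) * t) := by
    have hderiv (τ : ℝ) (hτ : τ ∈ Icc 0 T) : Sp' τ - Sm' τ ≤ c * M * (Sp τ - Sm τ) := by
      have := mul_le_mul_of_nonpos_left
        (hdrop (hmem τ hτ).1 (hmem τ hτ).2 (hbound τ hτ).2.1) hM.le
      linarith [hineq τ hτ]
    simpa using le_mul_exp_of_hasDerivAt_le_mul (fun τ hτ => (hSp τ hτ).sub (hSm τ hτ))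
      hderiv ht
  refine ⟨hosc, fun t ht s a hs₁ hs₂ ha₁ ha₂ => ?_⟩
  obtain ⟨hSm_mem, hSp_mem⟩ := hmem t ht
  have hs : s ∈ Icc m M := ⟨hSm_mem.1.trans hs₁, hs₂.trans hSp_mem.2⟩
  have hfs : f s ∈ Icc (f (Sp t)) (f (Sm t)) :=
    ⟨sub_nonneg.1 ((mul_nonneg hc.le (sub_nonneg.2 hs₂)).trans (hdrop hs hSp_mem hs₂)),
      sub_nonneg.1 ((mul_nonneg hc.le (sub_nonneg.2 hs₁)).trans (hdrop hSm_mem hs hs₁))⟩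
  calc |f s - a| ≤ f (Sm t) - f (Sp t) := Real.dist_le_of_mem_Icc hfs ⟨ha₁, ha₂⟩
    _ ≤ c' * (Sp t - Sm t) := hlip hSm_mem hSp_mem (hbound t ht).2.1
    _ ≤ c' * ((Sp 0 - Sm 0) * exp (-(-c * M) * t)) := by gcongr; exact hosc t ht
    _ = c' * (Sp 0 - Sm 0) * exp (-(-c * M) * t) := (mul_assoc _ _ _).symm

/-- Exponential decay of the scalar-curvature oscillation and of `|f(S) - A|` in the
scalar-negative case. -/
theorem stmt_2 (m M c c' : ℝ) (hmM : m ≤ M) (hM : M < 0) (hc : 0 < c) (hc' : 0 < c')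
    (f f' : ℝ → ℝ)
    (hf : ∀ x ∈ Set.Icc m M, HasDerivAt f (f' x) x)
    (hf'le : ∀ x ∈ Set.Icc m M, f' x ≤ -c)
    (hf'abs : ∀ x ∈ Set.Icc m M, |f' x| ≤ c')
    (T : ℝ) (hT : 0 < T)
    (Sm Sp Sm' Sp' : ℝ → ℝ)
    (hSm : ∀ t ∈ Set.Icc (0:ℝ) T, HasDerivAt Sm (Sm' t) t)
    (hSp : ∀ t ∈ Set.Icc (0:ℝ) T, HasDerivAt Sp (Sp' t) t)
    (hbound : ∀ t ∈ Set.Icc (0:ℝ) T, m ≤ Sm t ∧ Sm t ≤ Sp t ∧ Sp t ≤ M)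
    (hineq : ∀ t ∈ Set.Icc (0:ℝ) T, Sp' t - Sm' t ≤ M * (f (Sm t) - f (Sp t))) :
    (∀ t ∈ Set.Icc (0:ℝ) T,
      Sp t - Sm t ≤ (Sp 0 - Sm 0) * Real.exp (-(-c * M) * t)) ∧
    (∀ t ∈ Set.Icc (0:ℝ) T, ∀ s a : ℝ,
      Sm t ≤ s → s ≤ Sp t → f (Sp t) ≤ a → a ≤ f (Sm t) →
      |f s - a| ≤ (c' * (Sp 0 - Sm 0)) * Real.exp (-(-c * M) * t)) :=
  stmt_2_general m M c c' hM hc hc' f f' hf hf'le hf'abs T Sm Sp Sm' Sp' hSm hSp hbound hineq
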